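/- Let n be a positive integer, let H be a group, let ρ: G_1(SK) → H be a group homomorphism, and let g ∈ H satisfy g^n = ρ(D). Set b̂ = ρ(D) ρ(B) g ρ(B)^{-1} ρ(D)^{-1} and ê = ρ(D) ρ(E) g ρ(E)^{-1} ρ(D)^{-1}. If (ρ(E)ρ(D))^3 g (ρ(E)ρ(D))^{-3} = (ρ(B)ρ(D))^3 g (ρ(B)ρ(D))^{-3}, then there exists a group homomorphism ρ̂: G_n(SK) → H with ρ̂(d) = g, ρ̂(b) = b̂ and ρ̂(e) = ê; moreover ρ̂(b)^n = ρ(B), ρ̂(d)^n = ρ(D) and ρ̂(e)^n = ρ(E). -/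

import Mathlib

/-- Relators of G₁(SK) = ⟨B, D, E | B D B = D B D, E D E = D E D⟩, with B, D, E = 0, 1, 2. -/
def G1SKRels : Set (FreeGroup (Fin 3)) :=
  let B : FreeGroup (Fin 3) := FreeGroup.of 0
  let D : FreeGroup (Fin 3) := FreeGroup.of 1
  let E : FreeGroup (Fin 3) := FreeGroup.of 2
  {B * D * B * (D * B * D)⁻¹,
   E * D * E * (D * E * D)⁻¹}

/-- The knot group of the square knot. -/
abbrev G1SK := PresentedGroup G1SKRels

/-- Relators of the n-th generalized knot group of the square knot:
⟨b, d, e | b dⁿ bⁿ = dⁿ bⁿ d, e dⁿ eⁿ = dⁿ eⁿ d, eⁿ dⁿ e d⁻ⁿ e⁻ⁿ = bⁿ dⁿ b d⁻ⁿ b⁻ⁿ⟩,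
with b, d, e = 0, 1, 2. -/
def GnSKRels (n : ℕ) : Set (FreeGroup (Fin 3)) :=
  let b : FreeGroup (Fin 3) := FreeGroup.of 0
  let d : FreeGroup (Fin 3) := FreeGroup.of 1
  let e : FreeGroup (Fin 3) := FreeGroup.of 2
  {b * d ^ n * b ^ n * (d ^ n * b ^ n * d)⁻¹,
   e * d ^ n * e ^ n * (d ^ n * e ^ n * d)⁻¹,
   e ^ n * d ^ n * e * (d ^ n)⁻¹ * (e ^ n)⁻¹ * (b ^ n * d ^ n * b * (d ^ n)⁻¹ * (b ^ n)⁻¹)⁻¹}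

/-- The n-th generalized knot group of the square knot. -/
abbrev GnSK (n : ℕ) := PresentedGroup (GnSKRels n)

theorem stmt_10 (n : ℕ) (hn : 0 < n) {H : Type*} [Group H]
    (ρ : G1SK →* H) (g : H) (hg : g ^ n = ρ (PresentedGroup.of 1))
    (B D E : H) (hB : B = ρ (PresentedGroup.of 0)) (hD : D = ρ (PresentedGroup.of 1))
    (hE : E = ρ (PresentedGroup.of 2))
    (bhat ehat : H) (hbhat : bhat = D * B * g * B⁻¹ * D⁻¹) (hehat : ehat = D * E * g * E⁻¹ * D⁻¹)
    (hT : (E * D) ^ 3 * g * ((E * D) ^ 3)⁻¹ = (B * D) ^ 3 * g * ((B * D) ^ 3)⁻¹) :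
    ∃ ρhat : GnSK n →* H,
      ρhat (PresentedGroup.of 1) = g ∧
      ρhat (PresentedGroup.of 0) = bhat ∧
      ρhat (PresentedGroup.of 2) = ehat ∧
      ρhat (PresentedGroup.of 0) ^ n = B ∧
      ρhat (PresentedGroup.of 1) ^ n = D ∧
      ρhat (PresentedGroup.of 2) ^ n = E := by
  -- Abbreviations
  -- Extract braid relations in H
  have mkrel : ∀ r ∈ G1SKRels, ρ ((QuotientGroup.mk r : G1SK)) = 1 := by
    intro r hr
    have : (QuotientGroup.mk r : G1SK) = 1 :=
      (QuotientGroup.eq_one_iff r).mpr (Subgroup.subset_normalClosure hr)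
    rw [this]; exact map_one ρ
  have hBD : B * D * B = D * B * D := by
    have h1 := mkrel ((FreeGroup.of 0 : FreeGroup (Fin 3)) * FreeGroup.of 1 * FreeGroup.of 0 *
        (FreeGroup.of 1 * FreeGroup.of 0 * FreeGroup.of 1)⁻¹) (Set.mem_insert _ _)
    have h2 : ρ (PresentedGroup.of 0 * PresentedGroup.of 1 * PresentedGroup.of 0 *
        (PresentedGroup.of 1 * PresentedGroup.of 0 * PresentedGroup.of 1)⁻¹ : G1SK) = 1 := h1
    simp only [map_mul, map_inv] at h2
    rw [← hB, ← hD, mul_inv_eq_one] at h2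
    exact h2
  have hED : E * D * E = D * E * D := by
    have h1 := mkrel ((FreeGroup.of 2 : FreeGroup (Fin 3)) * FreeGroup.of 1 * FreeGroup.of 2 *
        (FreeGroup.of 1 * FreeGroup.of 2 * FreeGroup.of 1)⁻¹)
        (Set.mem_insert_of_mem _ rfl)
    have h2 : ρ (PresentedGroup.of 2 * PresentedGroup.of 1 * PresentedGroup.of 2 *
        (PresentedGroup.of 1 * PresentedGroup.of 2 * PresentedGroup.of 1)⁻¹ : G1SK) = 1 := h1
    simp only [map_mul, map_inv] at h2
    rw [← hE, ← hD, mul_inv_eq_one] at h2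
    exact h2
  have hgn : g ^ n = D := by rw [hg, hD]
  have hc : g * D = D * g := by rw [← hgn, ← pow_succ, ← pow_succ']
  -- powers of bhat and ehat
  have hbn : bhat ^ n = B := by
    have h1 : bhat = (D * B) * g * (D * B)⁻¹ := by rw [hbhat]; group
    rw [h1, conj_pow, hgn, ← hBD]
    group
  have hen : ehat ^ n = E := by
    have h1 : ehat = (D * E) * g * (D * E)⁻¹ := by rw [hehat]; group
    rw [h1, conj_pow, hgn, ← hED]
    group
  -- the key conjugation lemma
  have lem : ∀ X : H, X * D * X = D * X * D →
      (X * D) ^ 3 * g * ((X * D) ^ 3)⁻¹ = X * D * (D * X * g * X⁻¹ * D⁻¹) * D⁻¹ * X⁻¹ := by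
    intro X hX
    have h3 : (X * D) ^ 3 = X * D * D * X * D * D := by
      have e1 : (X * D) ^ 3 = X * D * (X * D * X) * D := by
        rw [pow_succ, pow_succ, pow_one]; group
      rw [e1, hX]; group
    have hDDg : D * D * g * D⁻¹ * D⁻¹ = g := by
      have h1 : D * g = g * D := hc.symm
      calc D * D * g * D⁻¹ * D⁻¹ = D * (D * g) * D⁻¹ * D⁻¹ := by group
        _ = D * (g * D) * D⁻¹ * D⁻¹ := by rw [h1]
        _ = (D * g) * D⁻¹ := by group
        _ = (g * D) * D⁻¹ := by rw [h1]
        _ = g := by group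
    calc (X * D) ^ 3 * g * ((X * D) ^ 3)⁻¹
        = (X * D * D * X) * (D * D * g * D⁻¹ * D⁻¹) * (X * D * D * X)⁻¹ := by rw [h3]; group
      _ = (X * D * D * X) * g * (X * D * D * X)⁻¹ := by rw [hDDg]
      _ = X * D * (D * X * g * X⁻¹ * D⁻¹) * D⁻¹ * X⁻¹ := by group
  have key3 : E * D * ehat * D⁻¹ * E⁻¹ = B * D * bhat * D⁻¹ * B⁻¹ := by
    rw [hehat, hbhat, ← lem E hED, ← lem B hBD]
    exact hT
  -- build the homomorphism
  set f : Fin 3 → H := fun i => if i = 0 then bhat else if i = 1 then g else ehat with hf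
  have hf0 : f 0 = bhat := rfl
  have hf1 : f 1 = g := rfl
  have hf2 : f 2 = ehat := rfl
  have hrels : ∀ r ∈ GnSKRels n, FreeGroup.lift f r = 1 := by
    intro r hr
    simp only [GnSKRels, Set.mem_insert_iff, Set.mem_singleton_iff] at hr
    rcases hr with h | h | h <;> subst h <;>
      simp only [map_mul, map_inv, map_pow, FreeGroup.lift_apply_of, hf0, hf1, hf2, hgn, hbn, hen]
    · rw [mul_inv_eq_one, hbhat]; group
    · rw [mul_inv_eq_one, hehat]; group
    · rw [mul_inv_eq_one]
      calc E * D * ehat * D⁻¹ * E⁻¹ = B * D * bhat * D⁻¹ * B⁻¹ := key3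
        _ = B * D * bhat * D⁻¹ * B⁻¹ := rfl
  refine ⟨PresentedGroup.toGroup hrels, ?_, ?_, ?_, ?_, ?_, ?_⟩ <;>
    simp only [PresentedGroup.toGroup.of, hf0, hf1, hf2, hgn, hbn, hen]
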